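/- arXiv:1712.04921 — 8 statements merged into one kernel-verified Lean document; each statement's English description precedes it below -/
import Mathlib

section
/- Let $d = 2g+1$ be an odd prime, $p$ a prime with $p \not\equiv 1 \pmod d$ and $p \ne d$. Then there exists $i \in \{1, \dots, g\}$ such that the residue of $pi$ modulo $d$ lies in $\{g+1, \dots, 2g\}$. -/
/-!
If no `p * i` with `1 ≤ i ≤ g` reduced mod `d` lands in `[g + 1, 2g]`, then multiplication by `p`
permutes the residues `1, …, g`. Summing them gives `p * S ≡ S [MOD d]` with `S = g (g + 1) / 2`,
which is prime to `d`, hence `p ≡ 1 [MOD d]`.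
-/

open Finset

theorem Nat.mul_sum_modEq_sum_of_mapsTo {n a : ℕ} {s : Finset ℕ} (ha : a.Coprime n)
    (hs : ∀ i ∈ s, i < n) (hmaps : ∀ i ∈ s, a * i % n ∈ s) :
    a * ∑ i ∈ s, i ≡ ∑ i ∈ s, i [MOD n] := by
  have hinj : Set.InjOn (fun i => a * i % n) s := by
    intro i hi j hj hij
    have hmod : i ≡ j [MOD n] := Nat.ModEq.cancel_left_of_coprime (Nat.coprime_comm.mp ha) hij
    rwa [Nat.ModEq, Nat.mod_eq_of_lt (hs i hi), Nat.mod_eq_of_lt (hs j hj)] at hmod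
  have hbij : Set.BijOn (fun i => a * i % n) s s :=
    (s.finite_toSet.injOn_iff_bijOn_of_mapsTo hmaps).mp hinj
  calc a * ∑ i ∈ s, i = ∑ i ∈ s, a * i := mul_sum _ _ _
    _ ≡ ∑ i ∈ s, a * i % n [MOD n] := Nat.ModEq.sum fun i _ => (Nat.mod_modEq _ _).symm
    _ = ∑ i ∈ s, i := sum_nbij _ hmaps hbij.injOn hbij.surjOn fun _ _ => rfl

theorem Nat.Prime.not_dvd_sum_Icc_id {d g : ℕ} (hd : d.Prime) (hg : 0 < g) (hgd : g + 1 < d) :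
    ¬ d ∣ ∑ i ∈ Icc 1 g, i := by
  have hsum : ∀ m, (∑ i ∈ Icc 1 m, i) * 2 = (m + 1) * m := by
    intro m
    induction m with
    | zero => simp
    | succ k ih => rw [sum_Icc_succ_top (by omega), add_mul, ih]; ring
  intro hdvd
  have hprod : d ∣ (g + 1) * g := hsum g ▸ hdvd.mul_right 2
  rcases hd.dvd_mul.mp hprod with h | h
  · exact absurd (Nat.le_of_dvd (by omega) h) (by omega)
  · exact absurd (Nat.le_of_dvd hg h) (by omega)

theorem stmt4_general (d g p : ℕ) (hd : d.Prime) (hdg : d = 2 * g + 1)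
    (hp : p.Prime) (hp1 : ¬ p ≡ 1 [MOD d]) (hpd : p ≠ d) :
    ∃ i ∈ Finset.Icc 1 g, (p * i) % d ∈ Finset.Icc (g + 1) (2 * g) := by
  have hg : 0 < g := by have := hd.two_le; omega
  have hdp : ¬ d ∣ p := fun h => hpd ((Nat.prime_dvd_prime_iff_eq hd hp).mp h).symm
  have hcop : p.Coprime d := Nat.coprime_comm.mp (hd.coprime_iff_not_dvd.mpr hdp)
  by_contra! hcon
  have hmaps : ∀ i ∈ Icc 1 g, p * i % d ∈ Icc 1 g := by
    intro i hi
    rw [mem_Icc] at hi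
    have hne : p * i % d ≠ 0 := fun h => by
      rcases hd.dvd_mul.mp (Nat.dvd_of_mod_eq_zero h) with h | h
      · exact hdp h
      · exact absurd (Nat.le_of_dvd (by omega) h) (by omega)
    have hnot := hcon i (mem_Icc.mpr hi)
    have hlt := Nat.mod_lt (p * i) hd.pos
    rw [mem_Icc] at hnot ⊢
    omega
  have hS := Nat.mul_sum_modEq_sum_of_mapsTo hcop (fun i hi => by have := (mem_Icc.mp hi).2; omega) hmaps
  have hSd := hd.coprime_iff_not_dvd.mpr (hd.not_dvd_sum_Icc_id hg (by omega))
  exact hp1 (Nat.ModEq.cancel_right_of_coprime hSd (by simpa using hS))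

theorem stmt4 (d g p : ℕ) (hd : d.Prime) (hdg : d = 2 * g + 1) (hgpos : 0 < g)
    (hp : p.Prime) (hp1 : ¬ p ≡ 1 [MOD d]) (hpd : p ≠ d) :
    ∃ i ∈ Finset.Icc 1 g, (p * i) % d ∈ Finset.Icc (g + 1) (2 * g) :=
  stmt4_general d g p hd hdg hp hp1 hpd
end

section
/- Let $d = 2g+1$ be an odd prime with $g$ prime, and let $p$ be a prime with $p \not\equiv 1 \pmod d$ and $p \not\equiv -1 \pmod d$ and $p \ne d$. Let $K$ be a field and let $H$ be a $g \times g$ matrix over $K$ such that $H_{i,j} = 0$ whenever $d \nmid pi - j$ (indices $1 \le i, j \le g$). Then $H^g = 0$, i.e., $H$ is nilpotent. -/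
/-!
If `(H ^ g) i j ≠ 0` then there is a chain of nonzero entries `i = i₀ → i₁ → ⋯ → i_g = j`, and
`i_{k+1} + 1 ≡ p (i_k + 1) (mod d)`, so the whole orbit `p ^ k (i + 1)`, `k ≤ g`, stays in the lower
half `{1, …, g}` of `ZMod d`. This already fails at `k = 1` if `d ∣ p`; otherwise, as `d = 2g + 1`,
Euler's criterion gives `p ^ g = ± 1`. If `p ^ g = -1`, then `-(i + 1)` lies in the lower half,
which is absurd. If `p ^ g = 1`, then `p` has prime order `g`, its orbit fills the lower half, and
the lower half would sum to `(i + 1) (1 + p + ⋯ + p ^ (g - 1)) = 0`; but it sums to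
`g (g + 1) / 2`, which is prime to `d`.
-/

open Finset

theorem Matrix.iterate_mem_range_of_pow_apply_ne_zero {ι R α : Type*} [Fintype ι] [DecidableEq ι]
    [Semiring R] {H : Matrix ι ι R} {σ : ι → α} {T : α → α}
    (hH : ∀ i j, H i j ≠ 0 → σ j = T (σ i)) :
    ∀ n i j, (H ^ n) i j ≠ 0 → ∀ k ≤ n, T^[k] (σ i) ∈ Set.range σ := by
  intro n
  induction n with
  | zero =>
    rintro i - - k hk
    obtain rfl : k = 0 := Nat.le_zero.mp hk
    exact ⟨i, rfl⟩
  | succ n ih =>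
    intro i j hij k hk
    rw [pow_succ', Matrix.mul_apply] at hij
    obtain ⟨m, -, hm⟩ := exists_ne_zero_of_sum_ne_zero hij
    rcases k with _ | k
    · exact ⟨i, rfl⟩
    · rw [Function.iterate_succ_apply, ← hH i m (left_ne_zero_of_mul hm)]
      exact ih m j (right_ne_zero_of_mul hm) k (by omega)

theorem Matrix.pow_eq_zero_of_forall_exists_iterate_notMem_range {ι R α : Type*} [Fintype ι]
    [DecidableEq ι] [Semiring R] {H : Matrix ι ι R} {σ : ι → α} {T : α → α} {n : ℕ}
    (hH : ∀ i j, H i j ≠ 0 → σ j = T (σ i))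
    (hescape : ∀ i, ∃ k ≤ n, T^[k] (σ i) ∉ Set.range σ) :
    H ^ n = 0 := by
  ext i j
  by_contra hij
  obtain ⟨k, hk, hnot⟩ := hescape i
  exact hnot (iterate_mem_range_of_pow_apply_ne_zero hH n i j hij k hk)

theorem IsPrimitiveRoot.sum_eq_zero_of_orbit_subset_image {ι R : Type*} [CommRing R] [IsDomain R]
    [DecidableEq R] {s : Finset ι} {f : ι → R} {a c : R} {n : ℕ} (ha : IsPrimitiveRoot a n)
    (hn : 1 < n) (hc : c ≠ 0) (hf : Set.InjOn f s) (hs : #s ≤ n)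
    (horbit : ∀ k < n, a ^ k * c ∈ f '' s) :
    ∑ i ∈ s, f i = 0 := by
  have hinj : Set.InjOn (fun k => a ^ k * c) (range n) := fun k hk l hl hkl =>
    ha.pow_inj (mem_range.mp hk) (mem_range.mp hl) (mul_right_cancel₀ hc hkl)
  have hfill : (range n).image (fun k => a ^ k * c) = s.image f := by
    refine eq_of_subset_of_card_le ?_ ?_
    · simpa [subset_iff, ← coe_image] using horbit
    · rw [card_image_of_injOn hinj, card_range, card_image_of_injOn hf]
      exact hs
  calc ∑ i ∈ s, f i = ∑ x ∈ (range n).image (fun k => a ^ k * c), x := by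
        rw [hfill, sum_image hf]
    _ = (∑ k ∈ range n, a ^ k) * c := by rw [sum_image hinj, sum_mul]
    _ = 0 := by rw [ha.geom_sum_eq_zero hn, zero_mul]

/-- The index `m : Fin g` stands for the residue `m + 1 ∈ {1, …, g}` modulo `d`. -/
def indexCast (d : ℕ) {g : ℕ} (m : Fin g) : ZMod d := (m : ℕ) + 1

section IndexCast

variable {d g : ℕ}

theorem indexCast_eq_natCast (m : Fin g) : indexCast d m = ((m + 1 : ℕ) : ZMod d) := by
  rw [indexCast, Nat.cast_succ]

theorem indexCast_ne_zero (hgd : g < d) (m : Fin g) : indexCast d m ≠ 0 := by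
  rw [indexCast_eq_natCast, Ne, ZMod.natCast_eq_zero_iff]
  exact Nat.not_dvd_of_pos_of_lt m.val.succ_pos (by omega)

theorem indexCast_injective (hgd : g < d) : Function.Injective (indexCast (g := g) d) := by
  intro l m hlm
  rw [indexCast_eq_natCast, indexCast_eq_natCast, ZMod.natCast_eq_natCast_iff',
    Nat.mod_eq_of_lt (by omega), Nat.mod_eq_of_lt (by omega)] at hlm
  exact Fin.ext (by omega)

theorem neg_indexCast_ne (hgd : 2 * g < d) (l m : Fin g) : -indexCast d l ≠ indexCast d m := by
  intro h
  have hsum : ((l + 1 + (m + 1) : ℕ) : ZMod d) = 0 := by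
    push_cast
    rw [← indexCast, ← indexCast, ← h, add_neg_cancel]
  rw [ZMod.natCast_eq_zero_iff] at hsum
  exact Nat.not_dvd_of_pos_of_lt (by omega) (by omega) hsum

theorem sum_indexCast_ne_zero [Fact d.Prime] (hg : 0 < g) (hgd : g + 1 < d) :
    ∑ m : Fin g, indexCast d m ≠ 0 := by
  have hgauss : (∑ m : Fin g, (m + 1 : ℕ)) * 2 = (g + 1) * g := by
    have h := sum_range_id_mul_two (g + 1)
    rw [sum_range_succ'] at h
    simpa [Fin.sum_univ_eq_sum_range (· + 1), mul_comm] using h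
  intro hzero
  have hdvd : d ∣ (g + 1) * g := by
    rw [← ZMod.natCast_eq_zero_iff, ← hgauss, Nat.cast_mul, Nat.cast_sum]
    simp_rw [← indexCast_eq_natCast]
    rw [hzero, zero_mul]
  rcases (Nat.Prime.dvd_mul Fact.out).mp hdvd with h | h
  · exact Nat.not_dvd_of_pos_of_lt (by omega) hgd h
  · exact Nat.not_dvd_of_pos_of_lt hg (by omega) h

theorem exists_pow_mul_indexCast_notMem_range [Fact d.Prime] (hdg : d = 2 * g + 1)
    (hg : g.Prime) {a : ZMod d} (ha : a ≠ 1) (i : Fin g) :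
    ∃ k ≤ g, a ^ k * indexCast d i ∉ Set.range (indexCast (g := g) d) := by
  have hgd : 2 * g < d := by omega
  have hgd' : g < d := by omega
  have hsucc : g + 1 < d := by have := hg.pos; omega
  by_contra! horbit
  by_cases ha0 : a = 0
  · obtain ⟨m, hm⟩ := horbit 1 hg.one_le
    exact indexCast_ne_zero hgd' m (by rw [hm, ha0, pow_one, zero_mul])
  have heuler : a ^ g = 1 ∨ a ^ g = -1 := by
    have hhalf : d / 2 = g := by omega
    simpa [hhalf] using ZMod.pow_div_two_eq_neg_one_or_one d ha0
  rcases heuler with hpow | hpow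
  · have : Fact g.Prime := ⟨hg⟩
    have hprim : IsPrimitiveRoot a g := orderOf_eq_prime hpow ha ▸ IsPrimitiveRoot.orderOf a
    refine sum_indexCast_ne_zero hg.pos hsucc ?_
    refine hprim.sum_eq_zero_of_orbit_subset_image hg.one_lt (indexCast_ne_zero hgd' i)
      (indexCast_injective hgd').injOn (card_fin g).le fun k hk => ?_
    rw [coe_univ, Set.image_univ]
    exact horbit k hk.le
  · obtain ⟨m, hm⟩ := horbit g le_rfl
    rw [hpow, neg_one_mul] at hm
    exact neg_indexCast_ne hgd i m hm.symm

end IndexCast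

theorem stmt7_general (d g p : ℕ) (hd : d.Prime) (hdg : d = 2 * g + 1)
    (hg : g.Prime)
    (hp1 : ¬ p ≡ 1 [MOD d])
    (K : Type*) [Field K] (H : Matrix (Fin g) (Fin g) K)
    (hH : ∀ i j : Fin g, ¬ (d : ℤ) ∣ (p * (i.val + 1) - (j.val + 1) : ℤ) → H i j = 0) :
    H ^ g = 0 := by
  have : Fact d.Prime := ⟨hd⟩
  have hstep : ∀ i j, H i j ≠ 0 → indexCast d j = (p : ZMod d) * indexCast d i := by
    intro i j hij
    have hzero := (ZMod.intCast_zmod_eq_zero_iff_dvd _ d).mpr (not_not.mp (mt (hH i j) hij))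
    push_cast at hzero
    rw [indexCast, indexCast]
    linear_combination -hzero
  have hp : (p : ZMod d) ≠ 1 := by
    rwa [← Nat.cast_one, Ne, ZMod.natCast_eq_natCast_iff]
  refine Matrix.pow_eq_zero_of_forall_exists_iterate_notMem_range hstep fun i => ?_
  simpa only [mul_left_iterate] using exists_pow_mul_indexCast_notMem_range hdg hg hp i

theorem stmt7 (d g p : ℕ) (hd : d.Prime) (hdodd : Odd d) (hdg : d = 2 * g + 1)
    (hg : g.Prime) (hp : p.Prime) (hpd : p ≠ d)
    (hp1 : ¬ p ≡ 1 [MOD d]) (hpm1 : ¬ (p : ℤ) ≡ -1 [ZMOD (d : ℤ)])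
    (K : Type*) [Field K] (H : Matrix (Fin g) (Fin g) K)
    (hH : ∀ i j : Fin g, ¬ (d : ℤ) ∣ (p * (i.val + 1) - (j.val + 1) : ℤ) → H i j = 0) :
    H ^ g = 0 :=
  stmt7_general d g p hd hdg hg hp1 K H hH
end

section
/- Let $d = 2g+1$ be an odd prime with $g$ prime, $p \ne d$ a prime with $p \not\equiv \pm 1 \pmod d$, and $K$ a field. If $H$ is a $g \times g$ matrix over $K$ with $H_{i,j} = 0$ whenever $d \nmid pi - j$, then the characteristic polynomial of $H$ is $T^g$. -/
/-!
A nonzero entry `H i j` forces `j ≡ p i (mod d)`, so a nonzero entry of `H ^ n` yields a chain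
`i, p i, …, pⁿ i` of residues that stays in `S = {1, …, g}`. Hence `H` is nilpotent as soon as no
orbit of multiplication by `p` on `(ℤ/d)ˣ` lies inside `S`. The order of `p` divides `2g` and is
neither `1` nor `2`, so it is `g` or `2g`; an orbit inside `S` has at most `#S = g` elements, so the
order is `g` and the orbit is all of `S`. Then `2 = pᵃ x` and `g = pᵇ x`, and `2g = -1` gives
`(-1)ᵍ = (pᵍ)ᵃ⁺ᵇ x²ᵍ = 1`, impossible since `g` is odd.
-/

open Polynomial Finset

namespace Matrix

variable {ι R M : Type*} [Fintype ι] [DecidableEq ι] [Semiring R] [Monoid M]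
  {H : Matrix ι ι R} {q : M} {e : ι → M}

theorem pow_mul_mem_range_of_pow_apply_ne_zero (hH : ∀ i j, H i j ≠ 0 → e j = q * e i)
    {n : ℕ} {i j : ι} (hij : (H ^ n) i j ≠ 0) {k : ℕ} (hk : k ≤ n) :
    q ^ k * e i ∈ Set.range e := by
  induction n generalizing i k with
  | zero => exact ⟨i, by simp [Nat.le_zero.mp hk]⟩
  | succ n ih =>
    rw [pow_succ', mul_apply] at hij
    obtain ⟨l, -, hl⟩ := exists_ne_zero_of_sum_ne_zero hij
    rcases k with _ | k
    · exact ⟨i, by simp⟩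
    · rw [pow_succ, mul_assoc, ← hH i l (left_ne_zero_of_mul hl)]
      exact ih (right_ne_zero_of_mul hl) (by omega)

theorem isNilpotent_of_forall_exists_pow_mul_notMem_range
    (hH : ∀ i j, H i j ≠ 0 → e j = q * e i) (hq : IsOfFinOrder q)
    (hesc : ∀ i, ∃ k, q ^ k * e i ∉ Set.range e) : IsNilpotent H := by
  refine ⟨orderOf q, ext fun i j => by_contra fun hij => ?_⟩
  obtain ⟨k, hk⟩ := hesc i
  rw [← pow_mod_orderOf] at hk
  exact hk (pow_mul_mem_range_of_pow_apply_ne_zero hH hij (Nat.mod_lt _ hq.orderOf_pos).le)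

theorem charpoly_eq_X_pow_of_isNilpotent {K : Type*} [CommRing K] [IsDomain K]
    {A : Matrix ι ι K} (hA : IsNilpotent A) : A.charpoly = X ^ Fintype.card ι :=
  sub_eq_zero.mp (isNilpotent_charpoly_sub_pow_of_isNilpotent hA).eq_zero

end Matrix

theorem Nat.eq_of_dvd_two_mul_of_le {m g : ℕ} (hg : g.Prime) (hm : m ∣ 2 * g) (hm1 : m ≠ 1)
    (hm2 : m ≠ 2) (hmg : m ≤ g) : m = g := by
  have hm0 : m ≠ 0 := by rintro rfl; simp [hg.ne_zero] at hm
  have hgm : g ∣ m := by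
    by_contra hgm
    have := Nat.le_of_dvd two_pos (((hg.coprime_iff_not_dvd).mpr hgm).symm.dvd_of_dvd_mul_right hm)
    omega
  exact le_antisymm hmg (Nat.le_of_dvd (by omega) hgm)

section Orbit

variable {M : Type*} [MonoidWithZero M] [DecidableEq M] {q x : M} {S : Finset M}

theorem card_image_pow_mul_range_orderOf [IsRightCancelMulZero M] (hx : x ≠ 0) :
    #((range (orderOf q)).image (q ^ · * x)) = orderOf q := by
  rw [card_image_of_injOn, card_range]
  intro a ha b hb hab
  exact pow_injOn_Iio_orderOf (by simpa using ha) (by simpa using hb) (mul_right_cancel₀ hx hab)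

theorem image_pow_mul_range_orderOf_subset (horbit : ∀ k, q ^ k * x ∈ S) :
    (range (orderOf q)).image (q ^ · * x) ⊆ S := by
  simpa [image_subset_iff] using fun k _ => horbit k

theorem orderOf_le_card_of_forall_pow_mul_mem [IsRightCancelMulZero M] (hx : x ≠ 0)
    (horbit : ∀ k, q ^ k * x ∈ S) : orderOf q ≤ #S :=
  card_image_pow_mul_range_orderOf hx ▸ card_le_card (image_pow_mul_range_orderOf_subset horbit)

theorem exists_pow_mul_eq_of_forall_pow_mul_mem [IsRightCancelMulZero M] (hx : x ≠ 0)
    (horbit : ∀ k, q ^ k * x ∈ S) (hcard : orderOf q = #S) {y : M} (hy : y ∈ S) :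
    ∃ k, q ^ k * x = y := by
  rw [← eq_of_subset_of_card_le (image_pow_mul_range_orderOf_subset horbit)
    (by rw [card_image_pow_mul_range_orderOf hx, hcard])] at hy
  obtain ⟨k, -, hk⟩ := mem_image.mp hy
  exact ⟨k, hk⟩

end Orbit

/-- `i : Fin g` stands for the paper's index `i + 1 ∈ {1, …, g}`, read modulo `d`. -/
def indexResidue (d : ℕ) {g : ℕ} (i : Fin g) : ZMod d := (i.val : ZMod d) + 1

section IndexResidue

variable {d g : ℕ}

theorem indexResidue_eq_natCast (i : Fin g) :
    indexResidue d i = ((i.val + 1 : ℕ) : ZMod d) := by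
  simp [indexResidue]

theorem indexResidue_injective (hgd : g < d) : Function.Injective (indexResidue d (g := g)) := by
  intro i j hij
  have := congrArg ZMod.val hij
  rw [indexResidue_eq_natCast, indexResidue_eq_natCast, ZMod.val_cast_of_lt (by omega),
    ZMod.val_cast_of_lt (by omega)] at this
  exact Fin.ext (by omega)

theorem indexResidue_ne_zero (hgd : g < d) (i : Fin g) : indexResidue d i ≠ 0 := by
  rw [indexResidue_eq_natCast, Ne, ZMod.natCast_eq_zero_iff]
  exact fun h => by have := Nat.le_of_dvd (by omega) h; omega

theorem two_mem_range_indexResidue (hg : 2 ≤ g) :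
    (2 : ZMod d) ∈ Set.range (indexResidue d (g := g)) :=
  ⟨⟨1, by omega⟩, by norm_num [indexResidue]⟩

theorem natCast_mem_range_indexResidue (hg : 1 ≤ g) :
    (g : ZMod d) ∈ Set.range (indexResidue d (g := g)) :=
  ⟨⟨g - 1, by omega⟩, by rw [indexResidue_eq_natCast, Fin.val_mk, Nat.sub_add_cancel hg]⟩

theorem indexResidue_eq_mul_of_dvd {p : ℕ} {i j : Fin g}
    (h : (d : ℤ) ∣ (p * (i.val + 1) - (j.val + 1) : ℤ)) :
    indexResidue d j = p * indexResidue d i := by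
  have := (ZMod.intCast_zmod_eq_zero_iff_dvd _ d).mpr h
  push_cast at this
  simp only [indexResidue]
  linear_combination -this

theorem exists_pow_mul_indexResidue_notMem_range [Fact d.Prime] (hdg : d = 2 * g + 1)
    (hg : g.Prime) {q : ZMod d} (hq0 : q ≠ 0) (hq1 : q ≠ 1) (hqm1 : q ≠ -1) (i : Fin g) :
    ∃ k, q ^ k * indexResidue d i ∉ Set.range (indexResidue d (g := g)) := by
  by_contra! horbit
  set x := indexResidue d i
  have hx : x ≠ 0 := indexResidue_ne_zero (by omega) i
  set S := univ.image (indexResidue d (g := g))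
  have hS : #S = g := by
    rw [card_image_of_injective _ (indexResidue_injective (by omega)), card_univ,
      Fintype.card_fin]
  have hmemS {y : ZMod d} : y ∈ S ↔ y ∈ Set.range (indexResidue d (g := g)) := by simp [S]
  have horbitS (k : ℕ) : q ^ k * x ∈ S := hmemS.mpr (horbit k)
  have hm2 : orderOf q ≠ 2 := fun h =>
    (sq_eq_one_iff.mp (h ▸ pow_orderOf_eq_one q)).elim hq1 hqm1
  have hm : orderOf q = g := by
    refine Nat.eq_of_dvd_two_mul_of_le hg (orderOf_dvd_of_pow_eq_one ?_)
      (fun h => hq1 (orderOf_eq_one_iff.mp h)) hm2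
      (hS ▸ orderOf_le_card_of_forall_pow_mul_mem hx horbitS)
    rw [show 2 * g = d - 1 by omega]
    exact ZMod.pow_card_sub_one_eq_one hq0
  obtain ⟨a, ha⟩ := exists_pow_mul_eq_of_forall_pow_mul_mem hx horbitS (hm.trans hS.symm)
    (hmemS.mpr (two_mem_range_indexResidue hg.two_le))
  obtain ⟨b, hb⟩ := exists_pow_mul_eq_of_forall_pow_mul_mem hx horbitS (hm.trans hS.symm)
    (hmemS.mpr (natCast_mem_range_indexResidue hg.one_le))
  have h2g : (2 * g : ZMod d) = -1 := by
    have : ((2 * g + 1 : ℕ) : ZMod d) = 0 := hdg ▸ ZMod.natCast_self d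
    push_cast at this
    linear_combination this
  have hx2g : x ^ (2 * g) = 1 := by
    rw [show 2 * g = d - 1 by omega]
    exact ZMod.pow_card_sub_one_eq_one hx
  have hneg : (-1 : ZMod d) ^ g = 1 := calc
    (-1 : ZMod d) ^ g = ((q ^ a * x) * (q ^ b * x)) ^ g := by rw [ha, hb, h2g]
    _ = (q ^ orderOf q) ^ (a + b) * x ^ (2 * g) := by rw [hm]; ring
    _ = 1 := by rw [pow_orderOf_eq_one, hx2g, one_pow, one_mul]
  have : Fact (2 < d) := ⟨by have := hg.two_le; omega⟩
  rw [(hg.odd_of_ne_two (fun h => hm2 (hm.trans h))).neg_one_pow] at hneg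
  exact ZMod.neg_one_ne_one hneg

end IndexResidue

theorem stmt8_general (d g p : ℕ) (hd : d.Prime) (hdg : d = 2 * g + 1)
    (hg : g.Prime) (hp : p.Prime) (hpd : p ≠ d)
    (hp1 : ¬ p ≡ 1 [MOD d]) (hpm1 : ¬ (p : ℤ) ≡ -1 [ZMOD (d : ℤ)])
    (K : Type*) [Field K] (H : Matrix (Fin g) (Fin g) K)
    (hH : ∀ i j : Fin g, ¬ (d : ℤ) ∣ (p * (i.val + 1) - (j.val + 1) : ℤ) → H i j = 0) :
    H.charpoly = X ^ g := by
  have : Fact d.Prime := ⟨hd⟩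
  have hq0 : (p : ZMod d) ≠ 0 := by
    rw [Ne, ZMod.natCast_eq_zero_iff]
    exact fun h => hpd ((Nat.prime_dvd_prime_iff_eq hd hp).mp h).symm
  have hq1 : (p : ZMod d) ≠ 1 := fun h =>
    hp1 ((ZMod.natCast_eq_natCast_iff p 1 d).mp (by simpa using h))
  have hqm1 : (p : ZMod d) ≠ -1 := fun h =>
    hpm1 ((ZMod.intCast_eq_intCast_iff _ _ _).mp (by push_cast; exact h))
  have hshift (i j : Fin g) (hij : H i j ≠ 0) : indexResidue d j = p * indexResidue d i :=
    indexResidue_eq_mul_of_dvd (not_not.mp (mt (hH i j) hij))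
  have hfin : IsOfFinOrder (p : ZMod d) := isOfFinOrder_iff_pow_eq_one.mpr
    ⟨d - 1, Nat.sub_pos_of_lt hd.one_lt, ZMod.pow_card_sub_one_eq_one hq0⟩
  have hnil : IsNilpotent H := Matrix.isNilpotent_of_forall_exists_pow_mul_notMem_range hshift
    hfin (exists_pow_mul_indexResidue_notMem_range hdg hg hq0 hq1 hqm1)
  simpa using Matrix.charpoly_eq_X_pow_of_isNilpotent hnil

theorem stmt8 (d g p : ℕ) (hd : d.Prime) (hdodd : Odd d) (hdg : d = 2 * g + 1)
    (hg : g.Prime) (hp : p.Prime) (hpd : p ≠ d)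
    (hp1 : ¬ p ≡ 1 [MOD d]) (hpm1 : ¬ (p : ℤ) ≡ -1 [ZMOD (d : ℤ)])
    (K : Type*) [Field K] (H : Matrix (Fin g) (Fin g) K)
    (hH : ∀ i j : Fin g, ¬ (d : ℤ) ∣ (p * (i.val + 1) - (j.val + 1) : ℤ) → H i j = 0) :
    H.charpoly = X ^ g :=
  stmt8_general d g p hd hdg hg hp hpd hp1 hpm1 K H hH
end

section
/- Let $p$ be an odd prime and $d = 2g+1$ an odd prime with $p \equiv 1 \pmod d$, say $p = md + 1$. Define the $g \times g$ matrix $H$ over $\mathbb{F}_p$ by $H_{i,j} = c_{pi - j}$, where $(x^d+1)^{(p-1)/2} = \sum_k c_k x^k$ in $\mathbb{F}_p[x]$ (with $c_k = 0$ for $k < 0$ or $k > d(p-1)/2$). Then $H$ is a diagonal matrix with diagonal entries $H_{i,i} = \binom{(p-1)/2}{mi} \ne 0$ in $\mathbb{F}_p$; in particular, $H$ is invertible. -/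
/-! Since `(X ^ d + 1) ^ N` is `(X + 1) ^ N` expanded by `d`, its `k`-th coefficient is
`N.choose (k / d)` when `d ∣ k` and `0` otherwise. With `p = m d + 1` the index of `H i j` is
`p (i + 1) - (j + 1) = d m (i + 1) + (i - j)`, and `|i - j| < g < d`, so only the diagonal indices
are multiples of `d`. The diagonal entries `((p - 1) / 2).choose (m (i + 1))` are nonzero mod `p`
because `(p - 1) / 2 < p`. -/

open Polynomial

theorem coeff_X_pow_add_one_pow {R : Type*} [CommSemiring R] {d : ℕ} (hd : 0 < d) (N k : ℕ) :
    ((X ^ d + 1 : R[X]) ^ N).coeff k = if d ∣ k then (N.choose (k / d) : R) else 0 := by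
  have hexpand : (X ^ d + 1 : R[X]) ^ N = expand R d ((X + 1) ^ N) := by simp
  rw [hexpand, coeff_expand hd, coeff_X_add_one_pow]

section HasseWitt

variable {p d g m : ℕ}

theorem dvd_hasseWitt_index_iff (hdg : d = 2 * g + 1) (hpm : p = m * d + 1) {i j : ℕ}
    (hi : i < g) (hj : j < g) : (d : ℤ) ∣ p * (i + 1) - (j + 1) ↔ i = j := by
  have hindex : (p * (i + 1) - (j + 1) : ℤ) = d * (m * (i + 1)) + ((i : ℤ) - j) := by
    subst hpm; push_cast; ring
  rw [hindex, dvd_add_right (dvd_mul_right _ _)]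
  refine ⟨fun hdvd => ?_, fun hij => by simp [hij]⟩
  have hsub := Int.eq_zero_of_abs_lt_dvd hdvd (by rw [abs_lt]; omega)
  omega

theorem hasseWitt_entry {R : Type*} [CommSemiring R] {N : ℕ} (hdg : d = 2 * g + 1)
    (hpm : p = m * d + 1) (hm : 0 < m) {c : ℤ → R}
    (hc : ∀ k : ℕ, c k = ((X ^ d + 1 : R[X]) ^ N).coeff k) {i j : ℕ} (hi : i < g) (hj : j < g) :
    c (p * (i + 1) - (j + 1) : ℤ) = if i = j then (N.choose (m * (i + 1)) : R) else 0 := by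
  have hnonneg : (0 : ℤ) ≤ p * (i + 1) - (j + 1) := by
    have hdp : d ≤ p := by subst hpm; nlinarith
    have hjp : (j : ℤ) + 1 ≤ p := by omega
    nlinarith
  obtain ⟨k, hk⟩ := Int.eq_ofNat_of_zero_le hnonneg
  have hdvd : d ∣ k ↔ i = j := by
    rw [← Int.natCast_dvd_natCast, ← hk, dvd_hasseWitt_index_iff hdg hpm hi hj]
  rw [hk, hc, coeff_X_pow_add_one_pow (by omega)]
  simp only [hdvd]
  split_ifs with hij
  · subst hij
    have hkd : k = d * (m * (i + 1)) := by
      have : (k : ℤ) = d * (m * (i + 1)) := by rw [← hk, hpm]; push_cast; ring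
      exact_mod_cast this
    rw [hkd, Nat.mul_div_cancel_left _ (by omega)]
  · rfl

end HasseWitt

theorem stmt9_general (p d g m : ℕ) (hp : p.Prime) (hdg : d = 2 * g + 1) (hpm : p = m * d + 1)
    (c : ℤ → ZMod p)
    (hc : ∀ k : ℕ, c k = (((X ^ d + 1) ^ ((p - 1) / 2) : (ZMod p)[X])).coeff k)
    (H : Matrix (Fin g) (Fin g) (ZMod p))
    (hH : ∀ i j : Fin g, H i j = c (p * (i.val + 1) - (j.val + 1) : ℤ)) :
    (∀ i j : Fin g, i ≠ j → H i j = 0) ∧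
    (∀ i : Fin g, H i i = (Nat.choose ((p - 1) / 2) (m * (i.val + 1)) : ZMod p)) ∧
    (∀ i : Fin g, H i i ≠ 0) ∧ IsUnit H := by
  have := Fact.mk hp
  have hm : 0 < m := Nat.pos_of_ne_zero fun h => hp.ne_one (by simpa [h] using hpm)
  have hentry (i j : Fin g) :
      H i j = if i = j then (((p - 1) / 2).choose (m * (i.val + 1)) : ZMod p) else 0 := by
    rw [hH, hasseWitt_entry hdg hpm hm hc i.isLt j.isLt]
    simp only [Fin.val_inj]
  have hdiag_ne (i : Fin g) : H i i ≠ 0 := by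
    have hle : m * (i.val + 1) ≤ (p - 1) / 2 := by
      rw [Nat.le_div_iff_mul_le two_pos, hpm, Nat.add_sub_cancel, hdg]
      nlinarith [i.isLt]
    rw [hentry, if_pos rfl, Ne, ZMod.natCast_eq_zero_iff, ← hp.coprime_iff_not_dvd]
    exact hp.coprime_choose_of_lt (by omega) hle
  have hdiag : H = Matrix.diagonal fun i => H i i := by
    ext i j
    by_cases hij : i = j
    · simp [hij]
    · simp [hentry, hij]
  refine ⟨fun i j hij => by simp [hentry, hij], fun i => by simp [hentry], hdiag_ne, ?_⟩
  rw [hdiag, Matrix.isUnit_diagonal]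
  exact Pi.isUnit_iff.mpr fun i => (hdiag_ne i).isUnit

theorem stmt9 (p d g m : ℕ) (hp : p.Prime) (hpodd : Odd p) (hd : d.Prime)
    (hdodd : Odd d) (hdg : d = 2 * g + 1) (hpm : p = m * d + 1)
    (c : ℤ → ZMod p)
    (hc : ∀ k : ℕ, c k = (((X ^ d + 1) ^ ((p - 1) / 2) : (ZMod p)[X])).coeff k)
    (hcneg : ∀ k : ℤ, k < 0 → c k = 0)
    (H : Matrix (Fin g) (Fin g) (ZMod p))
    (hH : ∀ i j : Fin g, H i j = c (p * (i.val + 1) - (j.val + 1) : ℤ)) :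
    (∀ i j : Fin g, i ≠ j → H i j = 0) ∧
    (∀ i : Fin g, H i i = (Nat.choose ((p - 1) / 2) (m * (i.val + 1)) : ZMod p)) ∧
    (∀ i : Fin g, H i i ≠ 0) ∧ IsUnit H :=
  stmt9_general p d g m hp hdg hpm c hc H hH
end

section
/- Let $p$ be an odd prime and $d = 2g+1$ an odd prime with $p \equiv -1 \pmod d$. Define the $g \times g$ matrix $H$ over $\mathbb{F}_p$ by $H_{i,j} = c_{pi-j}$, where $(x^d+1)^{(p-1)/2} = \sum_k c_k x^k$ in $\mathbb{F}_p[x]$. Then $H$ is the zero matrix. -/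
open Polynomial

/-
Expanding, `(X ^ d + 1) ^ m` only has monomials of degree divisible by `d`. The entry
`H i j = c (p * i - j)` sits at an index congruent to `-(i + j)` modulo `d` because `p ≡ -1`,
and `2 ≤ i + j ≤ 2 * g < d`, so that index is never a multiple of `d`.
-/

lemma coeff_X_pow_add_one_pow_eq_zero_of_not_dvd {R : Type*} [CommSemiring R] {d n : ℕ}
    (m : ℕ) (h : ¬ d ∣ n) : ((X ^ d + 1 : R[X]) ^ m).coeff n = 0 := by
  rw [add_pow]
  simp only [one_pow, mul_one, finsetSum_coeff, ← pow_mul]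
  refine Finset.sum_eq_zero fun k _ => ?_
  rw [coeff_mul_natCast, coeff_X_pow, if_neg fun he => h ⟨k, he⟩, zero_mul]

lemma Int.not_dvd_mul_sub_of_modEq_neg_one {d p i j : ℤ} (hp : p ≡ -1 [ZMOD d])
    (hi : 0 < i) (hj : 0 < j) (hij : i + j < d) : ¬ d ∣ p * i - j := by
  intro h
  have hcongr : p * i - j ≡ -(i + j) [ZMOD d] := by
    convert (hp.mul_right i).sub_right j using 1
    ring
  have hdvd : d ∣ i + j := dvd_neg.mp (hcongr.dvd_iff.mp h)
  exact (Int.le_of_dvd (by omega) hdvd).not_gt hij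

theorem stmt10_general (p d g : ℕ) (hdg : d = 2 * g + 1) (hpm1 : (p : ℤ) ≡ -1 [ZMOD (d : ℤ)])
    (c : ℤ → ZMod p)
    (hc : ∀ k : ℕ, c k = (((X ^ d + 1) ^ ((p - 1) / 2) : (ZMod p)[X])).coeff k)
    (hcneg : ∀ k : ℤ, k < 0 → c k = 0)
    (H : Matrix (Fin g) (Fin g) (ZMod p))
    (hH : ∀ i j : Fin g, H i j = c (p * (i.val + 1) - (j.val + 1) : ℤ)) :
    H = 0 := by
  ext i j
  rw [hH, Matrix.zero_apply]
  have hnot_dvd : ¬ (d : ℤ) ∣ p * (i.val + 1) - (j.val + 1) :=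
    Int.not_dvd_mul_sub_of_modEq_neg_one hpm1 (by omega) (by omega) (by omega)
  obtain hneg | hnonneg := lt_or_ge (p * (i.val + 1) - (j.val + 1) : ℤ) 0
  · exact hcneg _ hneg
  · obtain ⟨n, hn⟩ := Int.eq_ofNat_of_zero_le hnonneg
    rw [hn] at hnot_dvd ⊢
    rw [hc, coeff_X_pow_add_one_pow_eq_zero_of_not_dvd]
    exact_mod_cast hnot_dvd

theorem stmt10 (p d g : ℕ) (hp : p.Prime) (hpodd : Odd p) (hd : d.Prime)
    (hdodd : Odd d) (hdg : d = 2 * g + 1) (hpm1 : (p : ℤ) ≡ -1 [ZMOD (d : ℤ)])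
    (c : ℤ → ZMod p)
    (hc : ∀ k : ℕ, c k = (((X ^ d + 1) ^ ((p - 1) / 2) : (ZMod p)[X])).coeff k)
    (hcneg : ∀ k : ℤ, k < 0 → c k = 0)
    (H : Matrix (Fin g) (Fin g) (ZMod p))
    (hH : ∀ i j : Fin g, H i j = c (p * (i.val + 1) - (j.val + 1) : ℤ)) :
    H = 0 :=
  stmt10_general p d g hdg hpm1 c hc hcneg H hH
end

section
/- Let $d = 2g+1$ be an odd prime, and let $p \ne d$ be a prime such that multiplication by $p$ modulo $d$ maps the set $\{1, 2, \dots, g\}$ of residues into itself (i.e., for every $i \in \{1,\dots,g\}$, the residue of $pi$ mod $d$ lies in $\{1,\dots,g\}$). Then $p \equiv 1 \pmod d$. -/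
/-! Let `r = p % d`; the hypothesis at `i = 1` gives `1 ≤ r ≤ g`. If `r ≥ 2`, the first multiple
`r * i` exceeding `g` is at most `g + r ≤ 2g < d`, so `p * i % d = r * i` falls outside `[1, g]`. -/

theorem Nat.exists_mem_Icc_mul_mem_Ioc {r g : ℕ} (hr : 2 ≤ r) (hrg : r ≤ g) :
    ∃ i ∈ Finset.Icc 1 g, r * i ∈ Finset.Ioc g (2 * g) := by
  refine ⟨g / r + 1, ?_, ?_⟩
  · have : g / r ≤ g / 2 := Nat.div_le_div_left hr (by norm_num)
    exact Finset.mem_Icc.mpr ⟨Nat.le_add_left 1 _, by omega⟩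
  · have hle : r * (g / r) ≤ g := Nat.mul_div_le g r
    have hlt : g < r * (g / r) + r := by
      have := Nat.div_add_mod g r
      have := Nat.mod_lt g (by omega : 0 < r)
      omega
    rw [Finset.mem_Ioc, mul_add_one]
    omega

theorem Nat.mod_eq_one_of_mul_mod_mem_Icc {d g p : ℕ} (hgd : 2 * g < d) (hg : 0 < g)
    (hmap : ∀ i ∈ Finset.Icc 1 g, p * i % d ∈ Finset.Icc 1 g) : p % d = 1 := by
  have hr : p % d ∈ Finset.Icc 1 g := by
    simpa using hmap 1 (Finset.mem_Icc.mpr ⟨le_rfl, hg⟩)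
  rw [Finset.mem_Icc] at hr
  by_contra hne
  obtain ⟨i, hi, hri⟩ := Nat.exists_mem_Icc_mul_mem_Ioc (r := p % d) (by omega) hr.2
  rw [Finset.mem_Ioc] at hri
  have hmod : p * i % d = p % d * i := by
    rw [← Nat.mod_mul_mod, Nat.mod_eq_of_lt (by omega)]
  have := Finset.mem_Icc.mp (hmap i hi)
  omega

theorem stmt13_general (d g p : ℕ) (hdg : d = 2 * g + 1)
    (hgpos : 0 < g)
    (hmap : ∀ i ∈ Finset.Icc 1 g, (p * i) % d ∈ Finset.Icc 1 g) :
    p ≡ 1 [MOD d] := by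
  have hp : p % d = 1 := Nat.mod_eq_one_of_mul_mod_mem_Icc (by omega) hgpos hmap
  rw [Nat.ModEq, hp, Nat.mod_eq_of_lt (by omega)]

theorem stmt13 (d g p : ℕ) (hd : d.Prime) (hdodd : Odd d) (hdg : d = 2 * g + 1)
    (hgpos : 0 < g) (hp : p.Prime) (hpd : p ≠ d)
    (hmap : ∀ i ∈ Finset.Icc 1 g, (p * i) % d ∈ Finset.Icc 1 g) :
    p ≡ 1 [MOD d] :=
  stmt13_general d g p hdg hgpos hmap
end

section
/- Let $d = 2g+1$ be an odd prime with $g$ prime, and let $p \ne d$ be a prime with $p \not\equiv 1 \pmod d$ and $p \not\equiv -1 \pmod d$. Then there exists $i \in \{1, \dots, g\}$ such that for all $j \in \{1, \dots, g\}$, $d \nmid pi - j$. -/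
/-!
Let `a = p mod d`, so `a ≠ 1`. Multiplication by `p` acts on residues as multiplication by `a`, and
for `i = ⌊g / a⌋ + 1 ∈ [1, g]` the product `a * i` lies in `{0} ∪ [g + 1, 2g]`: it is `0` when
`a = 0`, and otherwise it is the least multiple of `a` exceeding `g`, so it is `a` itself if
`a > g` and at most `g + a` if `a ≤ g`. Hence `p * i` is congruent modulo `d = 2g + 1` to no `j ∈ [1, g]`.
-/

theorem Nat.exists_mul_le_two_mul_notMem_Icc {g a : ℕ} (hg : 0 < g) (ha : a ≤ 2 * g)
    (ha1 : a ≠ 1) : ∃ i ∈ Finset.Icc 1 g, a * i ≤ 2 * g ∧ a * i ∉ Finset.Icc 1 g := by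
  refine ⟨g / a + 1, ?_, ?_⟩
  · have : g / a < g := by
      rcases Nat.lt_or_ge a 2 with h | h
      · obtain rfl : a = 0 := by omega
        simpa using hg
      · exact Nat.div_lt_self hg h
    exact Finset.mem_Icc.mpr ⟨Nat.le_add_left 1 _, this⟩
  · rcases Nat.eq_zero_or_pos a with rfl | ha0
    · simp
    have hlt : g < a * (g / a + 1) := Nat.lt_mul_div_succ g ha0
    simp only [Finset.mem_Icc, not_and_or, not_le]
    rcases Nat.lt_or_ge g a with h | h
    · rw [Nat.div_eq_of_lt h] at hlt ⊢
      omega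
    · have hle : a * (g / a) ≤ g := Nat.mul_div_le g a
      rw [mul_add_one] at hlt ⊢
      omega

theorem stmt14_general (d g p : ℕ) (hdg : d = 2 * g + 1)
    (hp1 : ¬ p ≡ 1 [MOD d]) :
    ∃ i ∈ Finset.Icc 1 g, ∀ j ∈ Finset.Icc 1 g, ¬ (d : ℤ) ∣ (p * i - j : ℤ) := by
  have hg : 0 < g := by
    by_contra! h
    exact hp1 (by simp [hdg, show g = 0 by omega, Nat.modEq_one])
  have ha1 : p % d ≠ 1 := fun h => hp1 (by rw [Nat.ModEq, h, Nat.mod_eq_of_lt (by omega)])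
  obtain ⟨i, hi, hle, hnot⟩ :=
    Nat.exists_mul_le_two_mul_notMem_Icc hg (by have := Nat.mod_lt p (by omega : 0 < d); omega) ha1
  refine ⟨i, hi, fun j hj hdvd => ?_⟩
  have hmod : j ≡ p % d * i [MOD d] :=
    (Nat.modEq_iff_dvd.mpr (by exact_mod_cast hdvd)).trans ((Nat.mod_modEq p d).mul_right i).symm
  have hj' : j < d := by simp only [Finset.mem_Icc] at hj; omega
  exact hnot (hmod.eq_of_lt_of_lt hj' (by omega) ▸ hj)

theorem stmt14 (d g p : ℕ) (hd : d.Prime) (hdodd : Odd d) (hdg : d = 2 * g + 1)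
    (hg : g.Prime) (hp : p.Prime) (hpd : p ≠ d)
    (hp1 : ¬ p ≡ 1 [MOD d]) (hpm1 : ¬ (p : ℤ) ≡ -1 [ZMOD (d : ℤ)]) :
    ∃ i ∈ Finset.Icc 1 g, ∀ j ∈ Finset.Icc 1 g, ¬ (d : ℤ) ∣ (p * i - j : ℤ) :=
  stmt14_general d g p hdg hp1
end

section
/- Let $K$ be a field, $n \ge 1$, and let $H$ be an $n \times n$ matrix over $K$ such that for every cyclic sequence $\alpha_1, \dots, \alpha_k$ (with $k \ge 1$, indices in $\{1,\dots,n\}$, and $\alpha_{k+1} := \alpha_1$) the product $\prod_{i=1}^k H_{\alpha_i, \alpha_{i+1}}$ is zero. Then the characteristic polynomial of $H$ equals $T^n$. -/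
/-!
Expanding `det (X - H)` over permutations, every `σ ≠ 1` contributes zero: following a
nontrivial orbit `x, σ x, σ² x, …` of `σ` for `orderOf σ` steps is a closed walk, so one of
the entries `H (σ^s x) (σ^(s+1) x)` vanishes, and it is an off-diagonal entry of the
characteristic matrix. Closed walks of length one give `H i i = 0`, so the identity
contributes `Xⁿ`.
-/

open Polynomial

lemma pow_val_add_one_orderOf {G : Type*} [Monoid G] (g : G) [NeZero (orderOf g)]
    (s : Fin (orderOf g)) : g ^ ((s + 1 : Fin (orderOf g)) : ℕ) = g * g ^ (s : ℕ) := by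
  calc g ^ ((s + 1 : Fin (orderOf g)) : ℕ)
      = g ^ (((s : ℕ) + 1 % orderOf g) % orderOf g) := by rw [Fin.val_add, Fin.val_one']
    _ = g ^ (s : ℕ) * g ^ (1 % orderOf g) := by rw [pow_mod_orderOf, pow_add]
    _ = g * g ^ (s : ℕ) := by rw [pow_mod_orderOf, pow_one, pow_mul_comm']

namespace Matrix

variable {ι : Type*} [Fintype ι] [DecidableEq ι]

lemma exists_apply_ne_and_eq_zero_of_forall_cycle_prod_eq_zero {R : Type*}
    [CommMonoidWithZero R] [NoZeroDivisors R] [Nontrivial R] (H : Matrix ι ι R)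
    (hH : ∀ (k : ℕ) [NeZero k] (α : Fin k → ι), ∏ i : Fin k, H (α i) (α (i + 1)) = 0)
    {σ : Equiv.Perm ι} (hσ : σ ≠ 1) : ∃ y, σ y ≠ y ∧ H y (σ y) = 0 := by
  obtain ⟨x, hx⟩ : ∃ x, σ x ≠ x := by
    by_contra! h
    exact hσ (Equiv.ext h)
  have : NeZero (orderOf σ) := ⟨(orderOf_pos σ).ne'⟩
  obtain ⟨s, -, hs⟩ := Finset.prod_eq_zero_iff.mp (hH (orderOf σ) fun s => (σ ^ (s : ℕ)) x)
  refine ⟨(σ ^ (s : ℕ)) x, fun h => hx ?_, ?_⟩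
  · rw [← Equiv.Perm.mul_apply, ← pow_succ', pow_succ, Equiv.Perm.mul_apply] at h
    exact (σ ^ (s : ℕ)).injective h
  · rwa [pow_val_add_one_orderOf, Equiv.Perm.mul_apply] at hs

lemma det_eq_prod_diag_of_forall_perm_ne_one {R : Type*} [CommRing R] (M : Matrix ι ι R)
    (hM : ∀ σ : Equiv.Perm ι, σ ≠ 1 → ∃ i, M (σ i) i = 0) : M.det = ∏ i, M i i := by
  rw [det_apply, Finset.sum_eq_single_of_mem 1 (Finset.mem_univ _)]
  · simp
  · intro σ _ hσ
    obtain ⟨i, hi⟩ := hM σ hσ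
    exact smul_eq_zero_of_right _ (Finset.prod_eq_zero (Finset.mem_univ i) hi)

end Matrix

theorem stmt15_general (K : Type*) [Field K] (n : ℕ)
    (H : Matrix (Fin n) (Fin n) K)
    (hH : ∀ (k : ℕ) [NeZero k] (α : Fin k → Fin n),
      ∏ i : Fin k, H (α i) (α (i + 1)) = 0) :
    H.charpoly = X ^ n := by
  have hdiag (i : Fin n) : H i i = 0 := by simpa using hH 1 fun _ => i
  have hperm (σ : Equiv.Perm (Fin n)) (hσ : σ ≠ 1) : ∃ i, H.charmatrix (σ i) i = 0 := by
    obtain ⟨y, hy, hHy⟩ :=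
      H.exists_apply_ne_and_eq_zero_of_forall_cycle_prod_eq_zero hH (inv_ne_one.mpr hσ)
    refine ⟨σ⁻¹ y, ?_⟩
    rw [show σ (σ⁻¹ y) = y from σ.apply_symm_apply y,
      Matrix.charmatrix_apply_ne _ _ _ (Ne.symm hy), hHy, map_zero, neg_zero]
  rw [Matrix.charpoly, Matrix.det_eq_prod_diag_of_forall_perm_ne_one _ hperm]
  simp [Matrix.charmatrix_apply_eq, hdiag]

theorem stmt15 (K : Type*) [Field K] (n : ℕ) (hn : 1 ≤ n)
    (H : Matrix (Fin n) (Fin n) K)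
    (hH : ∀ (k : ℕ) [NeZero k] (α : Fin k → Fin n),
      ∏ i : Fin k, H (α i) (α (i + 1)) = 0) :
    H.charpoly = X ^ n :=
  stmt15_general K n H hH
end
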